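/- For every x ∈ ℝ³, the matrix cancellation identity Σ_{j=1}^{3} τⱼ·( (1/2)·(G(x)⁻¹·∂ⱼG(x) − ∂ⱼG(x)·G(x)⁻¹) + (∂ⱼΩ(x)/Ω(x))·I ) = 0 holds in M₂(ℂ), where ∂ⱼ denotes the partial derivative in the j-th coordinate direction. (This is the identity which makes the conformally rescaled Dirac operator on ℝ³ agree with the pull-back of the Dirac operator on the 3-sphere.) -/

import Mathlib

/-!
Write `G = s • q` with `q = ℓ + i x·τ` (a quaternion, with conjugate `q(-x)` and norm
`q q(-x) = ℓ² + ‖x‖²`) and `s = (ℓ² + ‖x‖²)^(-1/2)`, so that `G⁻¹ = s • q(-x)`. In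
`G⁻¹ ∂ⱼG − ∂ⱼG G⁻¹` the term coming from `∂ⱼs` drops out because `q` and `q(-x)` commute, which
leaves `s² [x·τ, τⱼ]`. The Pauli identity `Σⱼ τⱼ [σ, τⱼ] = -4σ` turns the first half of the sum into
`-2 x·τ / (ℓ² + ‖x‖²)`, while `∂ⱼΩ / Ω = 2 xⱼ / (ℓ² + ‖x‖²)` contributes exactly the opposite.
-/

open Matrix Complex

noncomputable section

attribute [local instance] Matrix.normedAddCommGroup Matrix.normedSpace

/-- The Pauli matrices τ₁, τ₂, τ₃. -/
def pauli : Fin 3 → Matrix (Fin 2) (Fin 2) ℂ :=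
  ![!![0, 1; 1, 0], !![0, -I; I, 0], !![1, 0; 0, -1]]

/-- The Pauli vector x·τ = x₁τ₁ + x₂τ₂ + x₃τ₃ for x ∈ ℝ³. -/
def pauliVec (x : EuclideanSpace ℝ (Fin 3)) : Matrix (Fin 2) (Fin 2) ℂ :=
  (x 0 : ℂ) • pauli 0 + (x 1 : ℂ) • pauli 1 + (x 2 : ℂ) • pauli 2

/-- G(x) = (ℓ·I + i x·τ)/√(ℓ² + r²), the inverse gnomonic projection. -/
def Gmap (ℓ : ℝ) (x : EuclideanSpace ℝ (Fin 3)) : Matrix (Fin 2) (Fin 2) ℂ :=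
  (((Real.sqrt (ℓ ^ 2 + ‖x‖ ^ 2))⁻¹ : ℝ) : ℂ) •
    ((ℓ : ℂ) • (1 : Matrix (Fin 2) (Fin 2) ℂ) + I • pauliVec x)

/-- H(x) = ((ℓ² − r²)·I + 2iℓ x·τ)/(ℓ² + r²), the inverse stereographic projection. -/
def Hmap (ℓ : ℝ) (x : EuclideanSpace ℝ (Fin 3)) : Matrix (Fin 2) (Fin 2) ℂ :=
  ((((ℓ ^ 2 + ‖x‖ ^ 2))⁻¹ : ℝ) : ℂ) •
    (((ℓ ^ 2 - ‖x‖ ^ 2 : ℝ) : ℂ) • (1 : Matrix (Fin 2) (Fin 2) ℂ)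
      + ((2 * ℓ : ℝ) : ℂ) • I • pauliVec x)

/-- The conformal factor Ω(x) = (ℓ² + r²)/(4ℓ). -/
def Omap (ℓ : ℝ) (x : EuclideanSpace ℝ (Fin 3)) : ℝ := (ℓ ^ 2 + ‖x‖ ^ 2) / (4 * ℓ)

local notation "E3" => EuclideanSpace ℝ (Fin 3)
local notation "M2" => Matrix (Fin 2) (Fin 2) ℂ

lemma pauliVec_mul_self (x : E3) :
    pauliVec x * pauliVec x = ((‖x‖ ^ 2 : ℝ) : ℂ) • (1 : M2) := by
  rw [EuclideanSpace.norm_sq_eq]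
  ext i k
  fin_cases i <;> fin_cases k <;>
    simp [pauliVec, pauli, Matrix.mul_apply, Fin.sum_univ_two, Fin.sum_univ_three] <;> ring_nf <;>
    simp [I_sq]

lemma sum_pauli_mul_commutator (x : E3) :
    ∑ j, pauli j * (pauliVec x * pauli j - pauli j * pauliVec x) = (-4 : ℂ) • pauliVec x := by
  ext i k
  fin_cases i <;> fin_cases k <;>
    simp [Fin.sum_univ_three, pauliVec, pauli] <;> ring_nf <;> simp [I_sq] <;> ring

lemma sum_smul_pauli (x : E3) : ∑ j, (x j : ℂ) • pauli j = pauliVec x := by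
  simp [pauliVec, Fin.sum_univ_three]

lemma pauliVec_neg (x : E3) : pauliVec (-x) = -pauliVec x := by
  simp only [pauliVec, PiLp.neg_apply, Complex.ofReal_neg, neg_smul]
  abel

lemma pauliVec_single (j : Fin 3) : pauliVec (EuclideanSpace.single j 1) = pauli j := by
  fin_cases j <;> simp [pauliVec]

def pauliVecL : E3 →L[ℝ] M2 :=
  ∑ j, (EuclideanSpace.proj j : E3 →L[ℝ] ℝ).smulRight (pauli j)

lemma pauliVecL_apply (x : E3) : pauliVecL x = pauliVec x := by
  simp [pauliVecL, pauliVec, Fin.sum_univ_three, Complex.coe_smul]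

def quat (ℓ : ℝ) (x : E3) : M2 := (ℓ : ℂ) • (1 : M2) + I • pauliVec x

lemma quat_mul_quat_neg (ℓ : ℝ) (x : E3) :
    quat ℓ x * quat ℓ (-x) = ((ℓ ^ 2 + ‖x‖ ^ 2 : ℝ) : ℂ) • (1 : M2) := by
  simp only [quat, pauliVec_neg, add_mul, mul_add, smul_mul_smul, one_mul, mul_one, mul_neg,
    smul_neg, pauliVec_mul_self, smul_smul, I_mul_I]
  push_cast
  module

lemma quat_neg_mul_quat (ℓ : ℝ) (x : E3) : quat ℓ (-x) * quat ℓ x = quat ℓ x * quat ℓ (-x) := by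
  simpa [norm_neg, quat_mul_quat_neg] using quat_mul_quat_neg ℓ (-x)

lemma quat_neg_mul_sub_mul_quat_neg (ℓ : ℝ) (x : E3) (M : M2) :
    quat ℓ (-x) * (I • M) - (I • M) * quat ℓ (-x) = pauliVec x * M - M * pauliVec x := by
  simp only [quat, pauliVec_neg, add_mul, mul_add, smul_mul_smul, one_mul, mul_one, smul_neg,
    neg_mul, mul_neg, I_mul_I]
  module

lemma hasFDerivAt_quat (ℓ : ℝ) (x : E3) : HasFDerivAt (quat ℓ) (I • pauliVecL) x := by
  have := (pauliVecL.hasFDerivAt (x := x)).const_smul I |>.const_add ((ℓ : ℂ) • (1 : M2))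
  refine this.congr_of_eventuallyEq (Filter.Eventually.of_forall fun y ↦ ?_)
  simp [quat, pauliVecL_apply]

lemma Gmap_eq (ℓ : ℝ) (x : E3) :
    Gmap ℓ x = (((√(ℓ ^ 2 + ‖x‖ ^ 2))⁻¹ : ℝ) : ℂ) • quat ℓ x := rfl

lemma Gmap_mul_Gmap_neg {ℓ : ℝ} (hℓ : ℓ ≠ 0) (x : E3) : Gmap ℓ x * Gmap ℓ (-x) = 1 := by
  have ht : 0 < ℓ ^ 2 + ‖x‖ ^ 2 := by positivity
  rw [Gmap_eq, Gmap_eq, norm_neg, smul_mul_smul, quat_mul_quat_neg, smul_smul, ← ofReal_mul,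
    ← ofReal_mul, ← mul_inv, Real.mul_self_sqrt ht.le, inv_mul_cancel₀ ht.ne', ofReal_one, one_smul]

lemma Gmap_inv {ℓ : ℝ} (hℓ : ℓ ≠ 0) (x : E3) : (Gmap ℓ x)⁻¹ = Gmap ℓ (-x) :=
  Matrix.inv_eq_right_inv (Gmap_mul_Gmap_neg hℓ x)

lemma fderiv_Gmap_apply {ℓ : ℝ} (hℓ : ℓ ≠ 0) (x v : E3) :
    fderiv ℝ (Gmap ℓ) x v = (((√(ℓ ^ 2 + ‖x‖ ^ 2))⁻¹ : ℝ) : ℂ) • I • pauliVec v +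
      fderiv ℝ (fun y : E3 ↦ (((√(ℓ ^ 2 + ‖y‖ ^ 2))⁻¹ : ℝ) : ℂ)) x v • quat ℓ x := by
  have ht : 0 < ℓ ^ 2 + ‖x‖ ^ 2 := by positivity
  have hsq : DifferentiableAt ℝ (fun y : E3 ↦ ℓ ^ 2 + ‖y‖ ^ 2) x :=
    (differentiableAt_id.norm_sq ℝ).const_add _
  have hs : DifferentiableAt ℝ (fun y : E3 ↦ (((√(ℓ ^ 2 + ‖y‖ ^ 2))⁻¹ : ℝ) : ℂ)) x :=
    ofRealCLM.differentiableAt.comp x ((hsq.sqrt ht.ne').inv (Real.sqrt_pos.2 ht).ne')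
  have h : HasFDerivAt (Gmap ℓ) ((((√(ℓ ^ 2 + ‖x‖ ^ 2))⁻¹ : ℝ) : ℂ) • I • pauliVecL +
      (fderiv ℝ (fun y : E3 ↦ (((√(ℓ ^ 2 + ‖y‖ ^ 2))⁻¹ : ℝ) : ℂ)) x).smulRight (quat ℓ x)) x :=
    hs.hasFDerivAt.smul (hasFDerivAt_quat ℓ x)
  rw [h.fderiv]
  simp only [_root_.add_apply, _root_.smul_apply,
    ContinuousLinearMap.smulRight_apply, pauliVecL_apply]

lemma Gmap_inv_mul_fderiv_sub {ℓ : ℝ} (hℓ : ℓ ≠ 0) (x v : E3) :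
    (Gmap ℓ x)⁻¹ * fderiv ℝ (Gmap ℓ) x v - fderiv ℝ (Gmap ℓ) x v * (Gmap ℓ x)⁻¹ =
      (((ℓ ^ 2 + ‖x‖ ^ 2)⁻¹ : ℝ) : ℂ) • (pauliVec x * pauliVec v - pauliVec v * pauliVec x) := by
  have ht : 0 ≤ ℓ ^ 2 + ‖x‖ ^ 2 := by positivity
  rw [Gmap_inv hℓ, fderiv_Gmap_apply hℓ, Gmap_eq, norm_neg]
  set s : ℂ := (((√(ℓ ^ 2 + ‖x‖ ^ 2))⁻¹ : ℝ) : ℂ)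
  set c : ℂ := fderiv ℝ (fun y : E3 ↦ (((√(ℓ ^ 2 + ‖y‖ ^ 2))⁻¹ : ℝ) : ℂ)) x v
  have hss : s * s = (((ℓ ^ 2 + ‖x‖ ^ 2)⁻¹ : ℝ) : ℂ) := by
    rw [← ofReal_mul, ← mul_inv, Real.mul_self_sqrt ht]
  calc _ = (s * s) • (quat ℓ (-x) * (I • pauliVec v) - (I • pauliVec v) * quat ℓ (-x)) +
        (s * c) • (quat ℓ (-x) * quat ℓ x - quat ℓ x * quat ℓ (-x)) := by
        simp only [mul_add, add_mul, smul_mul_smul]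
        module
    _ = _ := by
      rw [quat_neg_mul_sub_mul_quat_neg, quat_neg_mul_quat, sub_self, smul_zero, add_zero, hss]

lemma fderiv_Omap_apply (ℓ : ℝ) (x v : E3) :
    fderiv ℝ (Omap ℓ) x v = inner ℝ x v / (2 * ℓ) := by
  have h := (((hasFDerivAt_id x).norm_sq).const_add (ℓ ^ 2)).mul_const (4 * ℓ)⁻¹
  rw [show Omap ℓ = fun y ↦ (ℓ ^ 2 + ‖id y‖ ^ 2) * (4 * ℓ)⁻¹ from funext fun y ↦ rfl, h.fderiv]
  simp only [ContinuousLinearMap.comp_id, _root_.smul_apply, coe_innerSL_apply, nsmul_eq_mul,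
    Nat.cast_ofNat, smul_eq_mul, id_eq]
  ring

lemma fderiv_Omap_div_Omap {ℓ : ℝ} (hℓ : ℓ ≠ 0) (x v : E3) :
    fderiv ℝ (Omap ℓ) x v / Omap ℓ x = 2 * (ℓ ^ 2 + ‖x‖ ^ 2)⁻¹ * inner ℝ x v := by
  have ht : 0 < ℓ ^ 2 + ‖x‖ ^ 2 := by positivity
  rw [fderiv_Omap_apply, Omap]
  field_simp
  ring

/-- the cancellation identity
Σⱼ τⱼ·((1/2)(G⁻¹∂ⱼG − ∂ⱼG G⁻¹) + (∂ⱼΩ/Ω)·I) = 0. -/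
theorem dirac_conformal_cancellation (ℓ : ℝ) (hℓ : 0 < ℓ) (x : EuclideanSpace ℝ (Fin 3)) :
    (∑ j : Fin 3,
        pauli j *
          ((1 / 2 : ℂ) •
              ((Gmap ℓ x)⁻¹ * fderiv ℝ (Gmap ℓ) x (EuclideanSpace.single j 1) -
                fderiv ℝ (Gmap ℓ) x (EuclideanSpace.single j 1) * (Gmap ℓ x)⁻¹) +
            ((fderiv ℝ (Omap ℓ) x (EuclideanSpace.single j 1) / Omap ℓ x : ℝ) : ℂ) •
              (1 : Matrix (Fin 2) (Fin 2) ℂ))) = 0 := by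
  simp only [Gmap_inv_mul_fderiv_sub hℓ.ne', fderiv_Omap_div_Omap hℓ.ne', pauliVec_single,
    EuclideanSpace.inner_single_right, one_mul, conj_trivial, mul_add, mul_smul_comm, mul_one,
    Finset.sum_add_distrib, ofReal_mul, ← smul_smul, ← Finset.smul_sum, sum_pauli_mul_commutator,
    sum_smul_pauli]
  module
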